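/- The quantum advantage condition holds: if n₀, c, and ñ are positive integers with 3 + 2c + log₂(log₂ n₀) < 2ñ < n₀ and n₂ = n₀ - 2ñ, then 8·L²·log₂(n₀)·n₀·2^{n₂} < n₀·2^{n₀}, where L = 2^c. That is, the quantum gate-count bound Q(n₀,ñ) = 8L² log₂(n₀) n₀ 2^{n₂} is strictly less than the classical cost C(n₀) = n₀ 2^{n₀}. -/
import Mathlib


open Real

/-- Quantum advantage condition: if `3 + 2c + log₂(log₂ n₀) < 2ñ < n₀` then
the quantum cost `Q = 8 L² log₂(n₀) n₀ 2^{n₂}` is strictly less than the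
classical cost `C = n₀ 2^{n₀}`, where `L = 2^c` and `n₂ = n₀ - 2ñ`. -/
theorem quantum_advantage (n₀ c ntilde : ℕ) (hn₀ : 0 < n₀) (hc : 0 < c)
    (hnt : 0 < ntilde)
    (L : ℕ) (hL : L = 2 ^ c) (n₂ : ℕ) (hn₂ : n₂ = n₀ - 2 * ntilde)
    (hlow : 3 + 2 * (c : ℝ) + Real.logb 2 (Real.logb 2 n₀) < 2 * ntilde)
    (hhigh : 2 * ntilde < n₀) :
    8 * (L : ℝ) ^ 2 * Real.logb 2 n₀ * n₀ * 2 ^ n₂ < (n₀ : ℝ) * 2 ^ n₀ := by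
  have hn2 : (1:ℝ) < n₀ := by exact_mod_cast (show 1 < n₀ by omega)
  have hlog : (0:ℝ) < Real.logb 2 n₀ := Real.logb_pos one_lt_two hn2
  have key : 8 * (L:ℝ)^2 * Real.logb 2 n₀ < 2 ^ (2*ntilde) := by
    have h1 : (2:ℝ) ^ (3 + 2*(c:ℝ) + Real.logb 2 (Real.logb 2 n₀))
        < 2 ^ ((2*ntilde : ℕ) : ℝ) := by
      apply Real.rpow_lt_rpow_left_iff (by norm_num : (1:ℝ) < 2) |>.mpr
      push_cast
      linarith
    have h2 : (2:ℝ) ^ (3 + 2*(c:ℝ) + Real.logb 2 (Real.logb 2 n₀))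
        = 8 * (L:ℝ)^2 * Real.logb 2 n₀ := by
      rw [Real.rpow_add (by norm_num), Real.rpow_add (by norm_num),
        Real.rpow_logb (by norm_num) (by norm_num) hlog, hL]
      push_cast
      rw [show (2:ℝ)*(c:ℝ) = ((2*c : ℕ) : ℝ) by push_cast; ring,
        Real.rpow_natCast, show (3:ℝ) = ((3:ℕ):ℝ) by norm_num, Real.rpow_natCast]
      rw [mul_comm 2 c, pow_mul]
      ring
    rw [h2, Real.rpow_natCast] at h1
    exact h1
  have hsplit : (2:ℝ) ^ n₀ = 2 ^ (2*ntilde) * 2 ^ n₂ := by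
    rw [← pow_add]
    congr 1
    omega
  calc 8 * (L : ℝ) ^ 2 * Real.logb 2 n₀ * n₀ * 2 ^ n₂
      < 2 ^ (2*ntilde) * n₀ * 2 ^ n₂ := by
        apply mul_lt_mul_of_pos_right _ (by positivity)
        apply mul_lt_mul_of_pos_right key (by positivity)
    _ = (n₀ : ℝ) * 2 ^ n₀ := by rw [hsplit]; ring
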